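/- Let a pyramid with base vertices v₁,v₂,v₃,v₄ (bilinear quadrilateral base) be uniformly refined by placing edge midpoints and base centroid: the child pyramid has base vertices v₁, v₁₂=(v₁+v₂)/2, v₁₂₃₄=(v₁+v₂+v₃+v₄)/4, v₁₄=(v₁+v₄)/2. Then its distortion vector satisfies v₁ − v₁₂ + v₁₂₃₄ − v₁₄ = (1/4)(v₁ − v₂ + v₃ − v₄). Consequently, after n uniform refinements the distortion vector of any descendant pyramid obtained this way is 4^{−n} times that of the original. -/
import Mathlib


/-- The distortion vector of an ordered base quadruple. -/
noncomputable def dvec (w : Fin 4 → Fin 3 → ℝ) : Fin 3 → ℝ :=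
  w 0 - w 1 + w 2 - w 3

/-- The base quadruple of the `i`-th child pyramid in the uniform refinement
(edge midpoints and base centroid). -/
noncomputable def childBase (w : Fin 4 → Fin 3 → ℝ) (i : Fin 4) : Fin 4 → Fin 3 → ℝ :=
  ![![w 0, (1/2 : ℝ) • (w 0 + w 1), (1/4 : ℝ) • (w 0 + w 1 + w 2 + w 3),
      (1/2 : ℝ) • (w 0 + w 3)],
    ![(1/2 : ℝ) • (w 0 + w 1), w 1, (1/2 : ℝ) • (w 1 + w 2),
      (1/4 : ℝ) • (w 0 + w 1 + w 2 + w 3)],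
    ![(1/4 : ℝ) • (w 0 + w 1 + w 2 + w 3), (1/2 : ℝ) • (w 1 + w 2), w 2,
      (1/2 : ℝ) • (w 2 + w 3)],
    ![(1/2 : ℝ) • (w 0 + w 3), (1/4 : ℝ) • (w 0 + w 1 + w 2 + w 3),
      (1/2 : ℝ) • (w 2 + w 3), w 3]] i

/-- The base quadruple of a descendant pyramid after successively taking children. -/
noncomputable def descend (w : Fin 4 → Fin 3 → ℝ) : List (Fin 4) → Fin 4 → Fin 3 → ℝ :=
  fun l => l.foldl childBase w


lemma childBase_dvec (w : Fin 4 → Fin 3 → ℝ) (i : Fin 4) :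
    dvec (childBase w i) = (1/4 : ℝ) • dvec w := by
  fin_cases i <;> · funext j; simp [dvec, childBase]; ring

theorem stmt15 (w : Fin 4 → Fin 3 → ℝ) :
    -- the corner child at w₁ has distortion vector a quarter of the original
    dvec (childBase w 0) = (1/4 : ℝ) • dvec w ∧
    -- consequently, after n refinements, any descendant has distortion 4⁻ⁿ times it
    (∀ l : List (Fin 4), dvec (descend w l) = ((1/4 : ℝ) ^ l.length) • dvec w) := by
  refine ⟨childBase_dvec w 0, ?_⟩
  intro l
  induction l generalizing w with
  | nil => simp [descend]
  | cons a t ih =>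
      have : descend w (a :: t) = descend (childBase w a) t := rfl
      rw [this, ih, childBase_dvec, smul_smul]
      congr 1
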